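/- arXiv:1808.09642 — 9 statements merged into one kernel-verified Lean document; each statement's English description precedes it below -/
import Mathlib

section
/- Let u ∈ ℝ^d with ‖u‖ = 1. Then E[(uᵀX)⁴] = 3 + (ψ − 3)·Σ_{i=1}^d (aᵢᵀu)⁴, where a₁,…,a_d are the columns of A. -/
/-!
Write `uᵀX = ∑ vᵢ Yᵢ` with `v = Aᵀu`; orthogonality of `A` gives `∑ vᵢ² = ‖u‖² = 1`.
Adding the independent summands one at a time, the binomial expansion of `E[(Z + T)⁴]` keeps only
`E[Z⁴] + 6 E[Z²] E[T²] + E[T⁴]`, because `Z` has mean zero and, by symmetry, zero third moment.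
Induction then gives `E[(∑ vᵢ Yᵢ)⁴] = ψ ∑ vᵢ⁴ + 3 ((∑ vᵢ²)² - ∑ vᵢ⁴)`.
-/

open MeasureTheory ProbabilityTheory Finset Matrix

section Moments

variable {Ω : Type*} [MeasurableSpace Ω] {μ : Measure Ω}

lemma MeasureTheory.MemLp.integrable_pow_of_le [IsFiniteMeasure μ] {f : Ω → ℝ} {n k : ℕ}
    (hf : MemLp f n μ) (hk : k ≤ n) : Integrable (fun ω => f ω ^ k) μ := by
  have hfk : MemLp f k μ := hf.mono_exponent (by exact_mod_cast hk)
  refine (integrable_norm_iff ?_).1 ?_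
  · exact (hfk.aestronglyMeasurable.aemeasurable.pow_const k).aestronglyMeasurable
  · simpa only [norm_pow] using hfk.integrable_norm_pow'

lemma integral_const_mul_pow (c : ℝ) (X : Ω → ℝ) (k : ℕ) :
    ∫ ω, (c * X ω) ^ k ∂μ = c ^ k * ∫ ω, X ω ^ k ∂μ := by
  simp only [mul_pow, integral_const_mul]

lemma integral_pow_eq_zero_of_map_eq_map_neg {X : Ω → ℝ} (hX : AEMeasurable X μ)
    (hsymm : μ.map X = μ.map (fun ω => -X ω)) {n : ℕ} (hn : Odd n) :
    ∫ ω, X ω ^ n ∂μ = 0 := by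
  have hpow : AEStronglyMeasurable (fun x : ℝ => x ^ n) (μ.map X) :=
    (continuous_pow n).aestronglyMeasurable
  have h : ∫ ω, X ω ^ n ∂μ = ∫ ω, (-X ω) ^ n ∂μ := by
    rw [← integral_map hX hpow, hsymm, integral_map (φ := fun ω => -X ω) hX.neg (hsymm ▸ hpow)]
  rw [funext fun ω => hn.neg_pow (X ω), integral_neg] at h
  linarith

lemma ProbabilityTheory.IndepFun.integral_add_pow [IsFiniteMeasure μ] {X Y : Ω → ℝ}
    (hXY : IndepFun X Y μ) {n : ℕ} (hX : MemLp X n μ) (hY : MemLp Y n μ) :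
    ∫ ω, (X ω + Y ω) ^ n ∂μ
      = ∑ k ∈ range (n + 1), (∫ ω, X ω ^ k ∂μ) * (∫ ω, Y ω ^ (n - k) ∂μ) * n.choose k := by
  have hindep (k m : ℕ) : IndepFun (fun ω => X ω ^ k) (fun ω => Y ω ^ m) μ :=
    hXY.comp (measurable_id.pow_const k) (measurable_id.pow_const m)
  have hint (k : ℕ) (hk : k ∈ range (n + 1)) :
      Integrable (fun ω => X ω ^ k * Y ω ^ (n - k) * n.choose k) μ :=
    ((hindep k (n - k)).integrable_mul (hX.integrable_pow_of_le (mem_range_succ_iff.mp hk))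
      (hY.integrable_pow_of_le (Nat.sub_le n k))).mul_const _
  simp_rw [add_pow]
  rw [integral_finsetSum _ hint]
  refine sum_congr rfl fun k hk => ?_
  rw [integral_mul_const, (hindep k (n - k)).integral_fun_mul_eq_mul_integral
    (hX.integrable_pow_of_le (mem_range_succ_iff.mp hk)).1
    (hY.integrable_pow_of_le (Nat.sub_le n k)).1]

lemma ProbabilityTheory.IndepFun.integral_add_sq [IsProbabilityMeasure μ] {X Y : Ω → ℝ}
    (hXY : IndepFun X Y μ) (hX : MemLp X 2 μ) (hY : MemLp Y 2 μ) (hX1 : ∫ ω, X ω ∂μ = 0) :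
    ∫ ω, (X ω + Y ω) ^ 2 ∂μ = ∫ ω, X ω ^ 2 ∂μ + ∫ ω, Y ω ^ 2 ∂μ := by
  rw [hXY.integral_add_pow (n := 2) hX hY]
  simp only [sum_range_succ, sum_range_zero, pow_zero, pow_one, integral_const, probReal_univ,
    smul_eq_mul, hX1]
  norm_num
  ring

lemma ProbabilityTheory.IndepFun.integral_add_pow_four [IsProbabilityMeasure μ] {X Y : Ω → ℝ}
    (hXY : IndepFun X Y μ) (hX : MemLp X 4 μ) (hY : MemLp Y 4 μ) (hX1 : ∫ ω, X ω ∂μ = 0)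
    (hX3 : ∫ ω, X ω ^ 3 ∂μ = 0) :
    ∫ ω, (X ω + Y ω) ^ 4 ∂μ
      = ∫ ω, X ω ^ 4 ∂μ + 6 * (∫ ω, X ω ^ 2 ∂μ) * (∫ ω, Y ω ^ 2 ∂μ) + ∫ ω, Y ω ^ 4 ∂μ := by
  rw [hXY.integral_add_pow (n := 4) hX hY]
  simp only [sum_range_succ, sum_range_zero, pow_zero, pow_one, integral_const, probReal_univ,
    smul_eq_mul, hX1, hX3]
  norm_num [Nat.choose]
  ring

end Moments

section LinearCombination

variable {Ω ι : Type*} [MeasurableSpace Ω] {μ : Measure Ω} {Y : ι → Ω → ℝ}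

lemma ProbabilityTheory.iIndepFun.indepFun_mul_finsetSum_mul (hindep : iIndepFun Y μ)
    (hmeas : ∀ i, Measurable (Y i)) (v : ι → ℝ) {s : Finset ι} {a : ι} (ha : a ∉ s) :
    IndepFun (fun ω => v a * Y a ω) (fun ω => ∑ i ∈ s, v i * Y i ω) μ := by
  have h := (hindep.comp (fun i x => v i * x) fun i => measurable_const_mul (v i))
    |>.indepFun_finsetSum_of_notMem (fun i => (measurable_const_mul (v i)).comp (hmeas i)) ha
  convert h.symm using 1 <;> ext ω <;> simp [Finset.sum_apply]

lemma integral_finsetSum_mul_sq [IsProbabilityMeasure μ]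
    (hindep : iIndepFun Y μ) (hmeas : ∀ i, Measurable (Y i))
    (hL2 : ∀ i, MemLp (Y i) 2 μ) (hmean : ∀ i, ∫ ω, Y i ω ∂μ = 0)
    (hvar : ∀ i, ∫ ω, Y i ω ^ 2 ∂μ = 1) (v : ι → ℝ) (s : Finset ι) :
    ∫ ω, (∑ i ∈ s, v i * Y i ω) ^ 2 ∂μ = ∑ i ∈ s, v i ^ 2 := by
  classical
  induction s using Finset.induction_on with
  | empty => simp
  | insert a s ha ih =>
    simp only [sum_insert ha]
    rw [(hindep.indepFun_mul_finsetSum_mul hmeas v ha).integral_add_sq ((hL2 a).const_mul _)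
      (memLp_finsetSum s fun i _ => (hL2 i).const_mul _) (by simp [integral_const_mul, hmean]),
      integral_const_mul_pow, hvar, ih, mul_one]

lemma integral_finsetSum_mul_pow_four [IsProbabilityMeasure μ]
    (hindep : iIndepFun Y μ) (hmeas : ∀ i, Measurable (Y i))
    (hL4 : ∀ i, MemLp (Y i) 4 μ) (hmean : ∀ i, ∫ ω, Y i ω ∂μ = 0)
    (hvar : ∀ i, ∫ ω, Y i ω ^ 2 ∂μ = 1) (hcube : ∀ i, ∫ ω, Y i ω ^ 3 ∂μ = 0) {ψ : ℝ}
    (hpsi : ∀ i, ∫ ω, Y i ω ^ 4 ∂μ = ψ) (v : ι → ℝ) (s : Finset ι) :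
    ∫ ω, (∑ i ∈ s, v i * Y i ω) ^ 4 ∂μ
      = ψ * ∑ i ∈ s, v i ^ 4 + 3 * ((∑ i ∈ s, v i ^ 2) ^ 2 - ∑ i ∈ s, v i ^ 4) := by
  classical
  induction s using Finset.induction_on with
  | empty => simp
  | insert a s ha ih =>
    simp only [sum_insert ha]
    rw [(hindep.indepFun_mul_finsetSum_mul hmeas v ha).integral_add_pow_four
      ((hL4 a).const_mul _) (memLp_finsetSum s fun i _ => (hL4 i).const_mul _)
      (by simp [integral_const_mul, hmean]) (by rw [integral_const_mul_pow, hcube, mul_zero]),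
      integral_const_mul_pow, integral_const_mul_pow, hpsi, hvar, ih,
      integral_finsetSum_mul_sq hindep hmeas (fun i => (hL4 i).mono_exponent (by norm_num))
        hmean hvar]
    ring

end LinearCombination

namespace Matrix

lemma vecMul_dotProduct_vecMul_self {R m n : Type*} [CommSemiring R] [Fintype m] [Fintype n]
    [DecidableEq m] {A : Matrix m n R} (hA : A * Aᵀ = 1) (x : m → R) :
    x ᵥ* A ⬝ᵥ x ᵥ* A = x ⬝ᵥ x := by
  rw [← dotProduct_mulVec, ← mulVec_transpose, mulVec_mulVec, hA, one_mulVec]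

end Matrix

/-- Let `A` be an orthogonal matrix with columns `a₁,…,a_d`, `X = AY` where `Y`
has independent coordinates, symmetric about 0, mean 0, variance 1, identical fourth moments
`ψ`. For any unit vector `u`, `E[(uᵀX)⁴] = 3 + (ψ − 3)·Σᵢ (aᵢᵀu)⁴`. -/
theorem stmt_0 {Ω : Type*} [MeasurableSpace Ω] (μ : Measure Ω) [IsProbabilityMeasure μ]
    {d : ℕ} (Y : Fin d → Ω → ℝ) (ψ : ℝ)
    (hmeas : ∀ i, Measurable (Y i))
    (hindep : iIndepFun Y μ)
    (hsymm : ∀ i, μ.map (Y i) = μ.map (fun ω => -Y i ω))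
    (hL4 : ∀ i, MemLp (Y i) 4 μ)
    (hmean : ∀ i, ∫ ω, Y i ω ∂μ = 0)
    (hvar : ∀ i, ∫ ω, (Y i ω) ^ 2 ∂μ = 1)
    (hpsi : ∀ i, ∫ ω, (Y i ω) ^ 4 ∂μ = ψ)
    (A : Matrix (Fin d) (Fin d) ℝ) (hA : A.transpose * A = 1)
    (u : EuclideanSpace ℝ (Fin d)) (hu : ‖u‖ = 1) :
    ∫ ω, (∑ i, u i * A.mulVec (fun j => Y j ω) i) ^ 4 ∂μ
      = 3 + (ψ - 3) * ∑ i, (∑ j, A j i * u j) ^ 4 := by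
  set v : Fin d → ℝ := fun i => ∑ j, A j i * u j
  have hv : v = u.ofLp ᵥ* A := by ext i; simp [v, vecMul, dotProduct, mul_comm]
  have hv_sq : ∑ i, v i ^ 2 = 1 :=
    calc ∑ i, v i ^ 2 = u.ofLp ᵥ* A ⬝ᵥ u.ofLp ᵥ* A := by simp only [hv, dotProduct, sq]
      _ = u.ofLp ⬝ᵥ u.ofLp := vecMul_dotProduct_vecMul_self (mul_eq_one_comm.mp hA) _
      _ = ‖u‖ ^ 2 := by rw [EuclideanSpace.real_norm_sq_eq]; simp only [dotProduct, sq]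
      _ = 1 := by rw [hu, one_pow]
  have hproj (ω : Ω) : ∑ i, u i * A.mulVec (fun j => Y j ω) i = ∑ i, v i * Y i ω := by
    simpa only [hv, dotProduct] using dotProduct_mulVec u.ofLp A (fun j => Y j ω)
  have hcube (i : Fin d) : ∫ ω, Y i ω ^ 3 ∂μ = 0 :=
    integral_pow_eq_zero_of_map_eq_map_neg (hmeas i).aemeasurable (hsymm i) (by decide)
  simp only [hproj]
  rw [integral_finsetSum_mul_pow_four hindep hmeas hL4 hmean hvar hcube hpsi v univ, hv_sq]
  ring
end

section
/- Suppose B²β ≤ 2/3. For every v ∈ ℝ^d with ‖v‖ = 1, every y ∈ ℝ^d with ‖y‖² ≤ B, and every coordinate k, the k-th coordinate of v⁺ := (v + β(vᵀy)³y)/‖v + β(vᵀy)³y‖ satisfies |v⁺_k − v_k − β·((vᵀy)³·y_k − v_k·(vᵀy)⁴)| ≤ 9B⁴β². -/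
/-!
Write `s = ⟪v, y⟫`, `a = β s⁴` and `w = v + β s³ y`, so that `u = ‖w‖` satisfies
`u² = 1 + 2a + c` with `a² ≤ c = β² s⁶ ‖y‖²`. Substituting `v = w - β s³ y`, the error vector is
`(u⁻¹ - (1 - a)) w - β² s⁷ y`. Squeezing `u` between `1 + a` and `1 + a + c/2` gives
`|1 - u (1 - a)| ≤ c`, so both terms have norm at most `β² ‖y‖⁸ ≤ β² B⁴`, and a coordinate is
bounded by the norm.
-/

open RealInnerProductSpace

lemma abs_one_sub_mul_one_sub_le {a c u : ℝ} (ha₀ : 0 ≤ a) (ha₁ : a ≤ 1) (hac : a ^ 2 ≤ c)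
    (hu : 0 ≤ u) (hu2 : u ^ 2 = 1 + 2 * a + c) : |1 - u * (1 - a)| ≤ c := by
  have hlow : 1 + a ≤ u := by nlinarith
  have hhigh : u ≤ 1 + a + c / 2 := by nlinarith [sq_nonneg (u - 1)]
  rw [abs_le]
  constructor
  · nlinarith [mul_le_mul_of_nonneg_right hhigh (sub_nonneg.2 ha₁)]
  · nlinarith [mul_le_mul_of_nonneg_right hlow (sub_nonneg.2 ha₁)]

section InnerProductSpace

variable {E : Type*} [NormedAddCommGroup E] [InnerProductSpace ℝ E]

lemma norm_add_smul_sq_of_norm_eq_one {v : E} (hv : ‖v‖ = 1) (t : ℝ) (y : E) :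
    ‖v + t • y‖ ^ 2 = 1 + 2 * t * ⟪v, y⟫ + t ^ 2 * ‖y‖ ^ 2 := by
  rw [norm_add_sq_real, inner_smul_right, norm_smul, hv, mul_pow, Real.norm_eq_abs, sq_abs]
  ring

lemma norm_normalize_add_smul_sub_le {β : ℝ} (hβ : 0 ≤ β) {v y : E} (hv : ‖v‖ = 1)
    (hβy : β * ‖y‖ ^ 4 ≤ 1) :
    ‖‖v + (β * ⟪v, y⟫ ^ 3) • y‖⁻¹ • (v + (β * ⟪v, y⟫ ^ 3) • y) - v
        - β • (⟪v, y⟫ ^ 3 • y - ⟪v, y⟫ ^ 4 • v)‖ ≤ 2 * β ^ 2 * ‖y‖ ^ 8 := by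
  set s := ⟪v, y⟫
  set w := v + (β * s ^ 3) • y
  set u := ‖w‖
  have hs : |s| ≤ ‖y‖ := by simpa [hv] using abs_real_inner_le_norm v y
  have hs2 : s ^ 2 ≤ ‖y‖ ^ 2 := sq_le_sq.2 (by simpa using hs)
  have hu2 : u ^ 2 = 1 + 2 * (β * s ^ 4) + β ^ 2 * s ^ 6 * ‖y‖ ^ 2 := by
    rw [norm_add_smul_sq_of_norm_eq_one hv]
    ring
  have ha₁ : β * s ^ 4 ≤ 1 := by
    have : s ^ 4 ≤ ‖y‖ ^ 4 := by simpa [← pow_mul] using pow_le_pow_left₀ (sq_nonneg s) hs2 2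
    nlinarith
  have hac : (β * s ^ 4) ^ 2 ≤ β ^ 2 * s ^ 6 * ‖y‖ ^ 2 := by
    have := mul_le_mul_of_nonneg_left hs2 (by positivity : 0 ≤ β ^ 2 * s ^ 6)
    nlinarith
  have hc : β ^ 2 * s ^ 6 * ‖y‖ ^ 2 ≤ β ^ 2 * ‖y‖ ^ 8 := by
    have : s ^ 6 ≤ ‖y‖ ^ 6 := by simpa [← pow_mul] using pow_le_pow_left₀ (sq_nonneg s) hs2 3
    have := mul_le_mul_of_nonneg_left this (by positivity : 0 ≤ β ^ 2 * ‖y‖ ^ 2)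
    nlinarith
  have hu0 : 0 < u := by
    have : 0 < u ^ 2 := by rw [hu2]; positivity
    nlinarith [norm_nonneg w]
  have hmain : |1 - u * (1 - β * s ^ 4)| ≤ β ^ 2 * ‖y‖ ^ 8 :=
    (abs_one_sub_mul_one_sub_le (by positivity) ha₁ hac (norm_nonneg w) hu2).trans hc
  have herror : u⁻¹ • w - v - β • (s ^ 3 • y - s ^ 4 • v)
      = (u⁻¹ - (1 - β * s ^ 4)) • w - (β ^ 2 * s ^ 7) • y := by
    simp only [w]
    module
  have hfirst : ‖(u⁻¹ - (1 - β * s ^ 4)) • w‖ ≤ β ^ 2 * ‖y‖ ^ 8 := by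
    calc ‖(u⁻¹ - (1 - β * s ^ 4)) • w‖ = |(u⁻¹ - (1 - β * s ^ 4)) * u| := by
          rw [norm_smul, Real.norm_eq_abs, abs_mul, abs_of_pos hu0]
      _ = |1 - u * (1 - β * s ^ 4)| := by
          rw [sub_mul, inv_mul_cancel₀ hu0.ne', mul_comm]
      _ ≤ β ^ 2 * ‖y‖ ^ 8 := hmain
  have hsecond : ‖(β ^ 2 * s ^ 7) • y‖ ≤ β ^ 2 * ‖y‖ ^ 8 := by
    rw [norm_smul, Real.norm_eq_abs, abs_mul, abs_pow, abs_pow, abs_of_nonneg hβ]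
    have := pow_le_pow_left₀ (abs_nonneg s) hs 7
    calc β ^ 2 * |s| ^ 7 * ‖y‖ ≤ β ^ 2 * ‖y‖ ^ 7 * ‖y‖ := by gcongr
      _ = β ^ 2 * ‖y‖ ^ 8 := by ring
  rw [herror]
  linarith [norm_sub_le ((u⁻¹ - (1 - β * s ^ 4)) • w) ((β ^ 2 * s ^ 7) • y)]

end InnerProductSpace

theorem stmt_5_general {d : ℕ} (β B : ℝ) (hβ : 0 < β) (hcond : B ^ 2 * β ≤ 2 / 3)
    (v y : EuclideanSpace ℝ (Fin d)) (hv : ‖v‖ = 1) (hy : ‖y‖ ^ 2 ≤ B) (k : Fin d) :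
    |(‖v + (β * (∑ i, v i * y i) ^ 3) • y‖⁻¹ • (v + (β * (∑ i, v i * y i) ^ 3) • y)) k
        - v k - β * ((∑ i, v i * y i) ^ 3 * y k - v k * (∑ i, v i * y i) ^ 4)|
      ≤ 9 * B ^ 4 * β ^ 2 := by
  have hinner : ∑ i, v i * y i = ⟪v, y⟫ := by
    simp [PiLp.inner_apply, mul_comm]
  have hy4 : ‖y‖ ^ 8 ≤ B ^ 4 := by
    simpa [← pow_mul] using pow_le_pow_left₀ (sq_nonneg ‖y‖) hy 4
  have hβy : β * ‖y‖ ^ 4 ≤ 1 := by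
    have : ‖y‖ ^ 4 ≤ B ^ 2 := by simpa [← pow_mul] using pow_le_pow_left₀ (sq_nonneg ‖y‖) hy 2
    nlinarith
  rw [hinner]
  set x := ‖v + (β * ⟪v, y⟫ ^ 3) • y‖⁻¹ • (v + (β * ⟪v, y⟫ ^ 3) • y) - v
    - β • (⟪v, y⟫ ^ 3 • y - ⟪v, y⟫ ^ 4 • v)
  calc _ = ‖x k‖ := by simp [x, mul_comm]
    _ ≤ ‖x‖ := PiLp.norm_apply_le x k
    _ ≤ 2 * β ^ 2 * ‖y‖ ^ 8 := norm_normalize_add_smul_sub_le hβ.le hv hβy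
    _ ≤ 9 * B ^ 4 * β ^ 2 := by nlinarith [sq_nonneg β, pow_nonneg (sq_nonneg ‖y‖) 4]

/-- Suppose `B²β ≤ 2/3`. For every unit vector `v`, every `y` with `‖y‖² ≤ B`,
and every coordinate `k`, the `k`-th coordinate of the normalized one-step update
`v⁺ = (v + β(vᵀy)³y)/‖v + β(vᵀy)³y‖` satisfies
`|v⁺_k − v_k − β((vᵀy)³y_k − v_k(vᵀy)⁴)| ≤ 9B⁴β²`. -/
theorem stmt_5 {d : ℕ} (β B : ℝ) (hβ : 0 < β) (hB : 0 < B) (hcond : B ^ 2 * β ≤ 2 / 3)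
    (v y : EuclideanSpace ℝ (Fin d)) (hv : ‖v‖ = 1) (hy : ‖y‖ ^ 2 ≤ B) (k : Fin d) :
    |(‖v + (β * (∑ i, v i * y i) ^ 3) • y‖⁻¹ • (v + (β * (∑ i, v i * y i) ^ 3) • y)) k
        - v k - β * ((∑ i, v i * y i) ^ 3 * y k - v k * (∑ i, v i * y i) ^ 4)|
      ≤ 9 * B ^ 4 * β ^ 2 :=
  stmt_5_general β B hβ hcond v y hv hy k
end

section
/- Suppose B²β ≤ 2/3. For every v ∈ ℝ^d with ‖v‖ = 1, every y ∈ ℝ^d with ‖y‖² ≤ B, and every coordinate k, the k-th coordinate of v⁺ := (v + β(vᵀy)³y)/‖v + β(vᵀy)³y‖ satisfies |v⁺_k − v_k| ≤ 8B²β. -/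
/-!
Normalising `v + u` moves it by `|1 - ‖v + u‖| ≤ ‖u‖` when `‖v‖ = 1`, so the normalised update is
within `2‖u‖` of `v`. For `u = β ⟪v, y⟫³ y`, Cauchy–Schwarz gives `‖u‖ ≤ β ‖y‖⁴ ≤ B²β`, and a
coordinate never exceeds the Euclidean norm.
-/

open scoped RealInnerProductSpace

section Normalize

variable {E : Type*} [NormedAddCommGroup E] [NormedSpace ℝ E]

theorem norm_inv_norm_smul_sub_self_le (w : E) : ‖‖w‖⁻¹ • w - w‖ ≤ |1 - ‖w‖| := by
  rcases eq_or_ne w 0 with rfl | hw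
  · simp
  have hw' : ‖w‖ ≠ 0 := norm_ne_zero_iff.mpr hw
  refine le_of_eq ?_
  calc ‖‖w‖⁻¹ • w - w‖ = ‖(‖w‖⁻¹ - 1) • w‖ := by rw [sub_smul, one_smul]
    _ = |(‖w‖⁻¹ - 1) * ‖w‖| := by rw [norm_smul, Real.norm_eq_abs, abs_mul, abs_norm]
    _ = |1 - ‖w‖| := by rw [sub_one_mul, inv_mul_cancel₀ hw']

theorem norm_inv_norm_smul_add_sub_le {v : E} (hv : ‖v‖ = 1) (u : E) :
    ‖‖v + u‖⁻¹ • (v + u) - v‖ ≤ 2 * ‖u‖ := by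
  have hrescale : ‖‖v + u‖⁻¹ • (v + u) - (v + u)‖ ≤ ‖u‖ :=
    calc ‖‖v + u‖⁻¹ • (v + u) - (v + u)‖ ≤ |‖v‖ - ‖v + u‖| := by
          simpa [hv] using norm_inv_norm_smul_sub_self_le (v + u)
      _ ≤ ‖v - (v + u)‖ := abs_norm_sub_norm_le _ _
      _ = ‖u‖ := by rw [sub_add_cancel_left, norm_neg]
  calc ‖‖v + u‖⁻¹ • (v + u) - v‖ = ‖(‖v + u‖⁻¹ • (v + u) - (v + u)) + u‖ := by
        congr 1; abel
    _ ≤ ‖u‖ + ‖u‖ := (norm_add_le _ _).trans (add_le_add_left hrescale _)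
    _ = 2 * ‖u‖ := (two_mul _).symm

end Normalize

theorem norm_inner_pow_three_smul_le {F : Type*} [NormedAddCommGroup F] [InnerProductSpace ℝ F]
    {v : F} (hv : ‖v‖ = 1) {β : ℝ} (hβ : 0 ≤ β) (y : F) :
    ‖(β * ⟪v, y⟫ ^ 3) • y‖ ≤ β * ‖y‖ ^ 4 := by
  have hcs : |⟪v, y⟫| ≤ ‖y‖ := by simpa [hv] using abs_real_inner_le_norm v y
  calc ‖(β * ⟪v, y⟫ ^ 3) • y‖ = β * (|⟪v, y⟫| ^ 3 * ‖y‖) := by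
        rw [norm_smul, Real.norm_eq_abs, abs_mul, abs_of_nonneg hβ, abs_pow, mul_assoc]
    _ ≤ β * (‖y‖ ^ 3 * ‖y‖) := by gcongr
    _ = β * ‖y‖ ^ 4 := by ring

theorem stmt_6_general {d : ℕ} (β B : ℝ) (hβ : 0 < β)
    (v y : EuclideanSpace ℝ (Fin d)) (hv : ‖v‖ = 1) (hy : ‖y‖ ^ 2 ≤ B) (k : Fin d) :
    |(‖v + (β * (∑ i, v i * y i) ^ 3) • y‖⁻¹ • (v + (β * (∑ i, v i * y i) ^ 3) • y)) k
        - v k| ≤ 8 * B ^ 2 * β := by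
  have hinner : ∑ i, v i * y i = ⟪v, y⟫ := by simp [PiLp.inner_apply, mul_comm]
  have hy4 : ‖y‖ ^ 4 ≤ B ^ 2 := by
    rw [show ‖y‖ ^ 4 = (‖y‖ ^ 2) ^ 2 by ring]
    exact pow_le_pow_left₀ (by positivity) hy 2
  rw [hinner, ← PiLp.sub_apply, ← Real.norm_eq_abs]
  calc _ ≤ ‖‖v + (β * ⟪v, y⟫ ^ 3) • y‖⁻¹ • (v + (β * ⟪v, y⟫ ^ 3) • y) - v‖ :=
        PiLp.norm_apply_le _ k
    _ ≤ 2 * (β * ‖y‖ ^ 4) :=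
        (norm_inv_norm_smul_add_sub_le hv _).trans
          (mul_le_mul_of_nonneg_left (norm_inner_pow_three_smul_le hv hβ.le y) two_pos.le)
    _ ≤ 8 * B ^ 2 * β := by nlinarith [sq_nonneg B]

/-- Suppose `B²β ≤ 2/3`. For every unit vector `v`, every `y` with `‖y‖² ≤ B`,
and every coordinate `k`, the `k`-th coordinate of the normalized one-step update
`v⁺ = (v + β(vᵀy)³y)/‖v + β(vᵀy)³y‖` satisfies `|v⁺_k − v_k| ≤ 8B²β`. -/
theorem stmt_6 {d : ℕ} (β B : ℝ) (hβ : 0 < β) (hB : 0 < B) (hcond : B ^ 2 * β ≤ 2 / 3)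
    (v y : EuclideanSpace ℝ (Fin d)) (hv : ‖v‖ = 1) (hy : ‖y‖ ^ 2 ≤ B) (k : Fin d) :
    |(‖v + (β * (∑ i, v i * y i) ^ 3) • y‖⁻¹ • (v + (β * (∑ i, v i * y i) ^ 3) • y)) k
        - v k| ≤ 8 * B ^ 2 * β :=
  stmt_6_general β B hβ v y hv hy k
end

section
/- Suppose B²β ≤ 2/3. For every v ∈ ℝ^d with ‖v‖ = 1 and every y ∈ ℝ^d with ‖y‖² ≤ B, the normalizing factor satisfies |‖v + β(vᵀy)³y‖^{−1} − 1 + β(vᵀy)⁴| ≤ (73/18)·B⁴β². -/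
/-!
Write `s = ⟪v, y⟫` and `c = B²β`. Since `‖v‖ = 1`, the squared norm `a²` of `v + βs³y` is
`1 + 2t + r` with `t = βs⁴ ≤ c` and `r = β²s⁶‖y‖² ≤ c²`. Second-order Taylor bounds for
`(1 + x)^(-1/2)` at `x = 2t + r` give `-r/2 ≤ a⁻¹ - 1 + t ≤ 3x²/8`, and `x ≤ 2c + c² ≤ 8c/3`.
-/

open scoped RealInnerProductSpace

section InvSqrtBounds

variable {a x : ℝ}

lemma one_sub_half_le_inv_of_sq_eq_one_add (ha : 0 < a) (h : a ^ 2 = 1 + x) :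
    1 - x / 2 ≤ a⁻¹ := by
  rcases le_or_gt (1 - x / 2) 0 with hx | hx
  · exact hx.trans (inv_pos.mpr ha).le
  · rw [← one_div, le_div_iff₀ ha]
    have hsq : ((1 - x / 2) * a) ^ 2 ≤ 1 := by
      rw [mul_pow, h]
      nlinarith [mul_nonneg (sq_nonneg x) (by linarith : (0 : ℝ) ≤ 3 - x)]
    nlinarith

lemma inv_le_of_sq_eq_one_add (ha : 0 < a) (hx : 0 ≤ x) (h : a ^ 2 = 1 + x) :
    a⁻¹ ≤ 1 - x / 2 + 3 / 8 * x ^ 2 := by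
  have hq : 0 < 1 - x / 2 + 3 / 8 * x ^ 2 := by nlinarith [sq_nonneg (x - 2 / 3)]
  rw [← one_div, div_le_iff₀ ha]
  -- `((1 - x/2 + 3x²/8) a)² - 1 = x³ (40 - 15x + 9x²) / 64`
  have hcube : 0 ≤ x ^ 3 * (40 - 15 * x + 9 * x ^ 2) :=
    mul_nonneg (by positivity) (by nlinarith [sq_nonneg (x - 5 / 6)])
  have hsq : 1 ≤ ((1 - x / 2 + 3 / 8 * x ^ 2) * a) ^ 2 := by nlinarith
  exact (one_le_sq_iff_one_le_abs _).mp hsq |>.trans_eq (abs_of_pos (by positivity))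

end InvSqrtBounds

lemma abs_inv_sub_one_add_le {a t r c : ℝ} (ha : 0 ≤ a) (ht : 0 ≤ t) (htc : t ≤ c)
    (hr : 0 ≤ r) (hrc : r ≤ c ^ 2) (hc : c ≤ 2 / 3) (h : a ^ 2 = 1 + (2 * t + r)) :
    |a⁻¹ - 1 + t| ≤ 73 / 18 * c ^ 2 := by
  set x := 2 * t + r
  have hx : 0 ≤ x := by positivity
  have ha' : 0 < a := by nlinarith
  have hlower := one_sub_half_le_inv_of_sq_eq_one_add ha' h
  have hupper := inv_le_of_sq_eq_one_add ha' hx h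
  have hxc : x ≤ 8 / 3 * c := by nlinarith
  have hx2 : x ^ 2 ≤ (8 / 3 * c) ^ 2 := pow_le_pow_left₀ hx hxc 2
  rw [abs_le]
  constructor <;> nlinarith

lemma norm_add_inner_cube_smul_sq {E : Type*} [NormedAddCommGroup E] [InnerProductSpace ℝ E]
    (β : ℝ) {v : E} (y : E) (hv : ‖v‖ = 1) :
    ‖v + (β * ⟪v, y⟫ ^ 3) • y‖ ^ 2
      = 1 + (2 * (β * ⟪v, y⟫ ^ 4) + (β * ⟪v, y⟫ ^ 3) ^ 2 * ‖y‖ ^ 2) := by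
  rw [norm_add_sq_real, real_inner_smul_right, norm_smul, hv, Real.norm_eq_abs, mul_pow, sq_abs]
  ring

lemma EuclideanSpace.sum_mul_eq_inner {d : ℕ} (v y : EuclideanSpace ℝ (Fin d)) :
    ∑ i, v i * y i = ⟪v, y⟫ := by
  simp only [PiLp.inner_apply, RCLike.inner_apply, conj_trivial]
  exact Finset.sum_congr rfl fun i _ => mul_comm _ _

theorem stmt_8_general {d : ℕ} (β B : ℝ) (hβ : 0 < β) (hcond : B ^ 2 * β ≤ 2 / 3)
    (v y : EuclideanSpace ℝ (Fin d)) (hv : ‖v‖ = 1) (hy : ‖y‖ ^ 2 ≤ B) :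
    |‖v + (β * (∑ i, v i * y i) ^ 3) • y‖⁻¹ - 1 + β * (∑ i, v i * y i) ^ 4|
      ≤ 73 / 18 * B ^ 4 * β ^ 2 := by
  rw [EuclideanSpace.sum_mul_eq_inner, mul_assoc, show B ^ 4 * β ^ 2 = (B ^ 2 * β) ^ 2 by ring]
  set s := ⟪v, y⟫
  have hsB : s ^ 2 ≤ B := by
    have := abs_real_inner_le_norm v y
    rw [hv, one_mul] at this
    exact (sq_le_sq' (abs_le.mp this).1 (abs_le.mp this).2).trans hy
  have hB : 0 ≤ B := (sq_nonneg s).trans hsB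
  have hs4 : s ^ 4 ≤ B ^ 2 := by
    simpa only [← pow_mul] using pow_le_pow_left₀ (sq_nonneg s) hsB 2
  have hs6 : s ^ 6 ≤ B ^ 3 := by
    simpa only [← pow_mul] using pow_le_pow_left₀ (sq_nonneg s) hsB 3
  refine abs_inv_sub_one_add_le (norm_nonneg _) (by positivity)
    (by nlinarith) (by positivity) ?_ hcond (norm_add_inner_cube_smul_sq β y hv)
  calc (β * s ^ 3) ^ 2 * ‖y‖ ^ 2 = β ^ 2 * s ^ 6 * ‖y‖ ^ 2 := by ring
    _ ≤ β ^ 2 * B ^ 3 * B := by gcongr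
    _ = (B ^ 2 * β) ^ 2 := by ring

/-- Suppose `B²β ≤ 2/3`. For every unit vector `v` and every `y` with
`‖y‖² ≤ B`, the normalizing factor satisfies
`|‖v + β(vᵀy)³y‖⁻¹ − 1 + β(vᵀy)⁴| ≤ (73/18)·B⁴β²`. -/
theorem stmt_8 {d : ℕ} (β B : ℝ) (hβ : 0 < β) (hB : 0 < B) (hcond : B ^ 2 * β ≤ 2 / 3)
    (v y : EuclideanSpace ℝ (Fin d)) (hv : ‖v‖ = 1) (hy : ‖y‖ ^ 2 ≤ B) :
    |‖v + (β * (∑ i, v i * y i) ^ 3) • y‖⁻¹ - 1 + β * (∑ i, v i * y i) ^ 4|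
      ≤ 73 / 18 * B ^ 4 * β ^ 2 :=
  stmt_8_general β B hβ hcond v y hv hy
end

section
/- Let a > 0 and let V : [0,∞) → ℝ^d be differentiable, solving the system dV_k/dt = a·V_k·(V_k² − Σ_{i=1}^d Vᵢ⁴) for each k = 1,…,d. If V₁(0)² ≥ 2·V_k(0)² for all k > 1, then for all t ≥ 0 and all k > 1, V₁(t)² ≥ 2·V_k(t)². -/
/-!
The region `c · V_k² ≤ V_j²` (`c ≥ 1`) is forward invariant. Along the flow the gap
`g = c V_k² - V_j²` satisfies `g' = C(t) g + 2ac(1 - c) V_k⁴ ≤ C(t) g` for a continuous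
coefficient `C`, and a linear differential inequality `g' ≤ C g` with `C` bounded above and
`g(0) ≤ 0` keeps `g ≤ 0`: `g` stays below every barrier `η e^{(L+1)t}` with `C ≤ L`, `η > 0`.
-/

open Set Filter Topology

theorem image_nonpos_of_deriv_right_le_mul_self {f f' C : ℝ → ℝ} {a b : ℝ}
    (hf : ContinuousOn f (Icc a b))
    (hf' : ∀ x ∈ Ico a b, HasDerivWithinAt f (f' x) (Ici x) x)
    (hC : BddAbove (C '' Ico a b)) (bound : ∀ x ∈ Ico a b, f' x ≤ C x * f x)
    (ha : f a ≤ 0) : ∀ x ∈ Icc a b, f x ≤ 0 := by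
  obtain ⟨L, hL⟩ := hC
  have below_barrier : ∀ η > 0, ∀ x ∈ Icc a b, f x ≤ gronwallBound η (L + 1) 0 (x - a) := by
    intro η hη
    refine image_le_of_deriv_right_lt_deriv_boundary hf hf' ?_
      (fun x => hasDerivAt_gronwallBound_shift η (L + 1) 0 x a) ?_
    · rw [sub_self, gronwallBound_x0]
      linarith
    · intro x hx hfx
      have hpos : 0 < f x := by
        rw [hfx, gronwallBound_ε0]
        positivity
      calc f' x ≤ C x * f x := bound x hx
        _ ≤ L * f x := by gcongr; exact hL (mem_image_of_mem C hx)
        _ < (L + 1) * f x := by linarith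
        _ = _ := by rw [hfx, add_zero]
  intro x hx
  have barrier_tendsto :
      Tendsto (fun η => gronwallBound η (L + 1) 0 (x - a)) (𝓝[>] 0) (𝓝 0) := by
    simp only [gronwallBound_ε0]
    exact ((continuous_id.mul continuous_const).tendsto' 0 0 (zero_mul _)).mono_left
      nhdsWithin_le_nhds
  exact ge_of_tendsto barrier_tendsto
    (eventually_nhdsWithin_of_forall fun η hη => below_barrier η hη x hx)

variable {ι : Type*} [Fintype ι]

def IsTensorSGDFlow (a : ℝ) (X : ℝ → ι → ℝ) : Prop :=
  ∀ t ∈ Ici (0 : ℝ), ∀ k, HasDerivWithinAt (fun s => X s k)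
    (a * X t k * (X t k ^ 2 - ∑ i, X t i ^ 4)) (Ici 0) t

namespace IsTensorSGDFlow

variable {a : ℝ} {X : ℝ → ι → ℝ}

theorem continuousOn (hX : IsTensorSGDFlow a X) (k : ι) :
    ContinuousOn (fun s => X s k) (Ici 0) :=
  fun t ht => (hX t ht k).continuousWithinAt

theorem hasDerivWithinAt_gap (hX : IsTensorSGDFlow a X) (c : ℝ) (j k : ι) {t : ℝ}
    (ht : t ∈ Ici 0) :
    HasDerivWithinAt (fun s => c * X s k ^ 2 - X s j ^ 2)
      (2 * a * (X t j ^ 2 + c * X t k ^ 2 - ∑ i, X t i ^ 4) * (c * X t k ^ 2 - X t j ^ 2)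
        + 2 * a * c * (1 - c) * X t k ^ 4) (Ici 0) t := by
  refine ((((hX t ht k).fun_pow 2).const_mul c).fun_sub ((hX t ht j).fun_pow 2)).congr_deriv ?_
  push_cast
  ring

theorem mul_sq_le_sq (hX : IsTensorSGDFlow a X) (ha : 0 ≤ a) {c : ℝ} (hc : 1 ≤ c) {j k : ι}
    (h0 : c * X 0 k ^ 2 ≤ X 0 j ^ 2) {t : ℝ} (ht : 0 ≤ t) : c * X t k ^ 2 ≤ X t j ^ 2 := by
  have hcont : ∀ i, ContinuousOn (fun s => X s i) (Icc 0 t) :=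
    fun i => (hX.continuousOn i).mono Icc_subset_Ici_self
  set C : ℝ → ℝ := fun s => 2 * a * (X s j ^ 2 + c * X s k ^ 2 - ∑ i, X s i ^ 4)
  have hC : ContinuousOn C (Icc 0 t) := by fun_prop
  have hcoef : 2 * a * c * (1 - c) ≤ 0 := by
    nlinarith [mul_nonneg (mul_nonneg ha (zero_le_one.trans hc)) (sub_nonneg.2 hc)]
  have hgap := image_nonpos_of_deriv_right_le_mul_self (f := fun s => c * X s k ^ 2 - X s j ^ 2)
    (by fun_prop)
    (fun x hx => (hX.hasDerivWithinAt_gap c j k hx.1).mono (Ici_subset_Ici.mpr hx.1))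
    ((isCompact_Icc.image_of_continuousOn hC).bddAbove.mono (image_mono Ico_subset_Icc_self))
    (fun x _ => add_le_of_nonpos_right
      (mul_nonpos_of_nonpos_of_nonneg hcoef (by positivity)))
    (by linarith) t ⟨ht, le_rfl⟩
  linarith

end IsTensorSGDFlow

/-- Let `a > 0` and `V : [0,∞) → ℝ^d` be differentiable, solving
`dV_k/dt = a·V_k·(V_k² − Σᵢ Vᵢ⁴)` for each `k`. If `V₁(0)² ≥ 2·V_k(0)²` for all `k > 1`,
then `V₁(t)² ≥ 2·V_k(t)²` for all `t ≥ 0` and all `k > 1`. -/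
theorem stmt_10 {d : ℕ} [NeZero d] (a : ℝ) (ha : 0 < a)
    (V : ℝ → EuclideanSpace ℝ (Fin d))
    (hODE : ∀ t ∈ Set.Ici (0 : ℝ), ∀ k : Fin d,
      HasDerivWithinAt (fun s => V s k)
        (a * V t k * ((V t k) ^ 2 - ∑ i, (V t i) ^ 4)) (Set.Ici 0) t)
    (h0 : ∀ k : Fin d, k ≠ 0 → 2 * (V 0 k) ^ 2 ≤ (V 0 0) ^ 2) :
    ∀ t ∈ Set.Ici (0 : ℝ), ∀ k : Fin d, k ≠ 0 → 2 * (V t k) ^ 2 ≤ (V t 0) ^ 2 :=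
  fun _ ht k hk =>
    IsTensorSGDFlow.mul_sq_le_sq (X := fun s => V s) hODE ha.le one_le_two (h0 k hk) ht
end

section
/- Let a > 0 and let V : [0,∞) → ℝ^d be a differentiable solution of dV_k/dt = a·V_k·(V_k² − Σ_{i=1}^d Vᵢ⁴), k = 1,…,d, with ‖V(0)‖ = 1 and V₁(0)² ≥ 2·V_k(0)² for all k > 1. Then for all t ≥ 0, a·V₁(t)⁴·(1 − V₁(t)²) ≤ d(V₁²)/dt (t) ≤ 2a·V₁(t)⁴·(1 − V₁(t)²). -/
/-!
Along the flow, `d/dt (Vₖ²) = 2a Vₖ² (Vₖ² − Q)` with `Q = ∑ᵢ Vᵢ⁴`. Both the defect `‖V‖² − 1` of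
the sphere constraint and the gap `V₁² − 2Vₖ²` satisfy linear differential inequalities
`g' ≥ c g` with continuous `c`, so an integrating factor shows that they keep the sign they have at
time `0`. On the sphere, with `Vₖ² ≤ V₁²/2` for `k ≠ 1`, the quartic sum is squeezed as
`V₁⁴ ≤ Q ≤ V₁⁴ + V₁²(1 − V₁²)/2`, and these two bounds are exactly the two claimed inequalities
for `d/dt (V₁²) = 2a V₁² (V₁² − Q)`.
-/

open Set

theorem nonneg_of_mul_le_hasDerivWithinAt {g g' c : ℝ → ℝ} {t₀ : ℝ}
    (hc : ContinuousOn c (Ici t₀))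
    (hg : ∀ t ∈ Ici t₀, HasDerivWithinAt g (g' t) (Ici t₀) t)
    (hcg : ∀ t ∈ Ici t₀, c t * g t ≤ g' t) (h₀ : 0 ≤ g t₀) :
    ∀ t ∈ Ici t₀, 0 ≤ g t := by
  set c' : ℝ → ℝ := fun x => c (max x t₀)
  have hc' : Continuous c' :=
    hc.comp_continuous (continuous_id.max continuous_const) fun x => le_max_right x t₀
  set C : ℝ → ℝ := fun x => ∫ u in t₀..x, c' u
  have hC : ∀ x, HasDerivAt C (c' x) x := fun x =>
    (hc'.integral_hasStrictDerivAt t₀ x).hasDerivAt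
  set ψ : ℝ → ℝ := fun x => g x * Real.exp (-C x)
  have hψ : MonotoneOn ψ (Ici t₀) := by
    have hgc : ContinuousOn g (Ici t₀) := fun t ht => (hg t ht).continuousWithinAt
    refine monotoneOn_of_hasDerivWithinAt_nonneg (f' := fun x => (g' x - c x * g x) *
        Real.exp (-C x)) (convex_Ici t₀)
      (hgc.mul (Real.continuous_exp.comp (continuous_iff_continuousAt.2 fun x =>
        (hC x).continuousAt).neg).continuousOn) ?_ ?_
    · intro x hx
      rw [interior_Ici] at hx ⊢
      have hx : t₀ ≤ x := (mem_Ioi.1 hx).le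
      have hcx : c' x = c x := by simp only [c', max_eq_left hx]
      refine (((hg x hx).mono Ioi_subset_Ici_self).mul
        ((hC x).neg.exp.hasDerivWithinAt)).congr_deriv ?_
      simp only [hcx, Pi.neg_apply]
      ring
    · intro x hx
      rw [interior_Ici] at hx
      exact mul_nonneg (sub_nonneg.2 (hcg x (mem_Ioi.1 hx).le)) (Real.exp_nonneg _)
  intro t ht
  have hψ₀ : ψ t₀ = g t₀ := by simp [ψ, C]
  have hψt : 0 ≤ g t * Real.exp (-C t) := h₀.trans (hψ₀ ▸ hψ self_mem_Ici ht ht)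
  exact (mul_nonneg_iff_of_pos_right (Real.exp_pos _)).1 hψt

theorem eq_zero_of_hasDerivWithinAt_eq_mul {g c : ℝ → ℝ} {t₀ : ℝ}
    (hc : ContinuousOn c (Ici t₀))
    (hg : ∀ t ∈ Ici t₀, HasDerivWithinAt g (c t * g t) (Ici t₀) t) (h₀ : g t₀ = 0) :
    ∀ t ∈ Ici t₀, g t = 0 := by
  intro t ht
  have hneg : ∀ t ∈ Ici t₀, HasDerivWithinAt (-g) (c t * (-g) t) (Ici t₀) t := fun t ht =>
    (hg t ht).neg.congr_deriv (by simp)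
  exact le_antisymm
    (neg_nonneg.1 (nonneg_of_mul_le_hasDerivWithinAt hc hneg (fun _ _ => le_rfl)
      (by simp [h₀]) t ht))
    (nonneg_of_mul_le_hasDerivWithinAt hc hg (fun _ _ => le_rfl) h₀.ge t ht)

theorem sum_pow_four_le_of_sum_sq_eq_one {ι : Type*} [Fintype ι] [DecidableEq ι] {x : ι → ℝ}
    (hx : ∑ i, x i ^ 2 = 1) (j : ι) (hj : ∀ k, k ≠ j → 2 * x k ^ 2 ≤ x j ^ 2) :
    ∑ i, x i ^ 4 ≤ x j ^ 4 + x j ^ 2 / 2 * (1 - x j ^ 2) := by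
  have hrest : ∑ i ∈ Finset.univ.erase j, x i ^ 2 = 1 - x j ^ 2 := by
    rw [← hx, ← Finset.add_sum_erase _ _ (Finset.mem_univ j), add_sub_cancel_left]
  have hterm : ∀ i ∈ Finset.univ.erase j, x i ^ 4 ≤ x j ^ 2 / 2 * x i ^ 2 := fun i hi => by
    nlinarith [hj i (Finset.ne_of_mem_erase hi), sq_nonneg (x i)]
  rw [← Finset.add_sum_erase _ _ (Finset.mem_univ j), ← hrest, Finset.mul_sum]
  gcongr with i hi
  exact hterm i hi

def SolvesQuarticFlow {d : ℕ} (a : ℝ) (V : ℝ → EuclideanSpace ℝ (Fin d)) : Prop :=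
  ∀ t ∈ Ici (0 : ℝ), ∀ k : Fin d,
    HasDerivWithinAt (fun s => V s k) (a * V t k * ((V t k) ^ 2 - ∑ i, (V t i) ^ 4)) (Ici 0) t

namespace SolvesQuarticFlow

variable {d : ℕ} {a : ℝ} {V : ℝ → EuclideanSpace ℝ (Fin d)}

theorem continuousOn (hV : SolvesQuarticFlow a V) (k : Fin d) :
    ContinuousOn (fun s => V s k) (Ici 0) :=
  fun t ht => (hV t ht k).continuousWithinAt

theorem hasDerivWithinAt_sq (hV : SolvesQuarticFlow a V) {t : ℝ} (ht : t ∈ Ici 0) (k : Fin d) :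
    HasDerivWithinAt (fun s => V s k ^ 2)
      (2 * a * V t k ^ 2 * (V t k ^ 2 - ∑ i, V t i ^ 4)) (Ici 0) t :=
  ((hV t ht k).pow 2).congr_deriv (by push_cast; ring)

theorem sum_sq_eq_one (hV : SolvesQuarticFlow a V) (h₀ : ‖V 0‖ = 1) :
    ∀ t ∈ Ici 0, ∑ i, V t i ^ 2 = 1 := by
  have hQ : ContinuousOn (fun s => -(2 * a * ∑ i, V s i ^ 4)) (Ici 0) := by
    have := hV.continuousOn
    fun_prop
  have hg : ∀ t ∈ Ici (0 : ℝ), HasDerivWithinAt (fun s => ∑ i, V s i ^ 2 - 1)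
      (-(2 * a * ∑ i, V t i ^ 4) * (∑ i, V t i ^ 2 - 1)) (Ici 0) t := fun t ht =>
    ((HasDerivWithinAt.fun_sum fun i _ => hV.hasDerivWithinAt_sq ht i).sub_const 1).congr_deriv
      (by
        have hterm : ∀ i, 2 * a * V t i ^ 2 * (V t i ^ 2 - ∑ i, V t i ^ 4)
            = 2 * a * V t i ^ 4 - 2 * a * (∑ i, V t i ^ 4) * V t i ^ 2 := fun i => by ring
        simp only [hterm, Finset.sum_sub_distrib, ← Finset.mul_sum]
        ring)
  have hg₀ : ∑ i, V 0 i ^ 2 - 1 = 0 := by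
    simp [← EuclideanSpace.real_norm_sq_eq, h₀]
  exact fun t ht => sub_eq_zero.1 (eq_zero_of_hasDerivWithinAt_eq_mul hQ hg hg₀ t ht)

theorem two_mul_sq_le_sq (hV : SolvesQuarticFlow a V) (ha : 0 ≤ a) {j k : Fin d}
    (h₀ : 2 * V 0 k ^ 2 ≤ V 0 j ^ 2) : ∀ t ∈ Ici 0, 2 * V t k ^ 2 ≤ V t j ^ 2 := by
  have hc : ContinuousOn (fun s => 2 * a * (V s j ^ 2 + 2 * V s k ^ 2) - 2 * a * ∑ i, V s i ^ 4)
      (Ici 0) := by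
    have := hV.continuousOn
    fun_prop
  have hg : ∀ t ∈ Ici (0 : ℝ), HasDerivWithinAt (fun s => V s j ^ 2 - 2 * V s k ^ 2)
      (2 * a * V t j ^ 2 * (V t j ^ 2 - ∑ i, V t i ^ 4)
        - 2 * (2 * a * V t k ^ 2 * (V t k ^ 2 - ∑ i, V t i ^ 4))) (Ici 0) t := fun t ht =>
    (hV.hasDerivWithinAt_sq ht j).sub ((hV.hasDerivWithinAt_sq ht k).const_mul 2)
  -- `x² - 2y² = (x + 2y)(x - 2y) + 2y²` with `x = Vⱼ²`, `y = Vₖ²`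
  have hcg : ∀ t ∈ Ici (0 : ℝ),
      (2 * a * (V t j ^ 2 + 2 * V t k ^ 2) - 2 * a * ∑ i, V t i ^ 4) * (V t j ^ 2 - 2 * V t k ^ 2)
        ≤ 2 * a * V t j ^ 2 * (V t j ^ 2 - ∑ i, V t i ^ 4)
          - 2 * (2 * a * V t k ^ 2 * (V t k ^ 2 - ∑ i, V t i ^ 4)) := fun t _ => by
    nlinarith [mul_nonneg ha (sq_nonneg (V t k ^ 2))]
  exact fun t ht => sub_nonneg.1 (nonneg_of_mul_le_hasDerivWithinAt hc hg hcg (sub_nonneg.2 h₀) t ht)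

end SolvesQuarticFlow

/-- Let `a > 0` and `V : [0,∞) → ℝ^d` be a differentiable solution of
`dV_k/dt = a·V_k·(V_k² − Σᵢ Vᵢ⁴)` with `‖V(0)‖ = 1` and `V₁(0)² ≥ 2·V_k(0)²` for all
`k > 1`. Then for all `t ≥ 0`,
`a·V₁(t)⁴·(1 − V₁(t)²) ≤ d(V₁²)/dt(t) ≤ 2a·V₁(t)⁴·(1 − V₁(t)²)`. -/
theorem stmt_12 {d : ℕ} [NeZero d] (a : ℝ) (ha : 0 < a)
    (V : ℝ → EuclideanSpace ℝ (Fin d))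
    (hODE : ∀ t ∈ Set.Ici (0 : ℝ), ∀ k : Fin d,
      HasDerivWithinAt (fun s => V s k)
        (a * V t k * ((V t k) ^ 2 - ∑ i, (V t i) ^ 4)) (Set.Ici 0) t)
    (hnorm : ‖V 0‖ = 1)
    (h0 : ∀ k : Fin d, k ≠ 0 → 2 * (V 0 k) ^ 2 ≤ (V 0 0) ^ 2) :
    ∀ t ∈ Set.Ici (0 : ℝ),
      a * (V t 0) ^ 4 * (1 - (V t 0) ^ 2)
          ≤ derivWithin (fun s => (V s 0) ^ 2) (Set.Ici 0) t ∧
      derivWithin (fun s => (V s 0) ^ 2) (Set.Ici 0) t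
          ≤ 2 * a * (V t 0) ^ 4 * (1 - (V t 0) ^ 2) := by
  have hV : SolvesQuarticFlow a V := hODE
  intro t ht
  rw [(hV.hasDerivWithinAt_sq ht 0).derivWithin (uniqueDiffOn_Ici 0 t ht)]
  have hQ_le : ∑ i, V t i ^ 4 ≤ V t 0 ^ 4 + V t 0 ^ 2 / 2 * (1 - V t 0 ^ 2) :=
    sum_pow_four_le_of_sum_sq_eq_one (hV.sum_sq_eq_one hnorm t ht) 0
      fun k hk => hV.two_mul_sq_le_sq ha.le (h0 k hk) t ht
  have hle_Q : V t 0 ^ 4 ≤ ∑ i, V t i ^ 4 :=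
    Finset.single_le_sum (f := fun i => V t i ^ 4) (fun i _ => by positivity) (Finset.mem_univ 0)
  have haV : 0 ≤ a * V t 0 ^ 2 := by positivity
  constructor
  · nlinarith [mul_le_mul_of_nonneg_left hQ_le haV]
  · nlinarith [mul_le_mul_of_nonneg_left hle_Q haV]
end

section
/- Fix d ≥ 3 and δ ∈ (0, 1/2). Let y : [0,∞) → ℝ be a differentiable solution of the scalar ODE dy/dt = y²·(1 − y) with initial value y(0) = 2/(d + 1). Then there exists T₀ ≥ 0 with y(T₀) = 1 − δ, and any such T₀ satisfies T₀ ≤ d − 3 + 4·log(1/(2δ)). -/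
/-!
Along a solution with values in `(0, 1)`, the antiderivative `odeClock` of `1 / (u² (1 - u))`
satisfies `odeClock (y t) = odeClock (y 0) + t`, so the hitting time of `1 - δ` is exactly
`odeClock (1 - δ) - odeClock (2 / (d + 1))`; the inequality `log x ≤ x - 1` bounds this explicitly.
The solution never exceeds the equilibrium `1`, hence is nondecreasing, and since `odeClock` is
strictly increasing the clock identity also forces `y` to reach `1 - δ` in finite time.
-/

open Set Real

theorem image_le_of_deriv_right_nonpos_above {g g' : ℝ → ℝ} {a b c : ℝ}
    (hg : ContinuousOn g (Icc a b)) (hg' : ∀ x ∈ Ico a b, HasDerivWithinAt g (g' x) (Ici x) x)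
    (hbound : ∀ x ∈ Ico a b, c < g x → g' x ≤ 0) (ha : g a ≤ c) :
    ∀ x ∈ Icc a b, g x ≤ c := by
  intro x hx
  refine le_of_forall_pos_le_add fun ε hε => ?_
  -- compare with the strictly increasing barrier `c + η (t - a + 1)`, `η (x - a + 1) = ε`
  have hlen : 0 < x - a + 1 := by linarith [hx.1]
  set η := ε / (x - a + 1)
  have hη : 0 < η := div_pos hε hlen
  have hB : ∀ t, HasDerivAt (fun t => c + η * (t - a + 1)) η t := fun t => by
    simpa using (((hasDerivAt_id t).sub_const a).add_const 1).const_mul η |>.const_add c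
  have := image_le_of_deriv_right_lt_deriv_boundary hg hg' (by linarith) hB
    (fun t ht hgt => (hbound t ht (by nlinarith [ht.1])).trans_lt hη) hx
  rwa [div_mul_cancel₀ ε hlen.ne'] at this

noncomputable def odeClock (u : ℝ) : ℝ := log u - log (1 - u) - u⁻¹

theorem hasDerivAt_odeClock {x : ℝ} (hx : x ∈ Ioo 0 1) :
    HasDerivAt odeClock (x ^ 2 * (1 - x))⁻¹ x := by
  obtain ⟨hx0, hx1⟩ := hx
  have hlog : HasDerivAt log x⁻¹ x := hasDerivAt_log hx0.ne'
  have hlog_one_sub : HasDerivAt (fun u => log (1 - u)) ((1 - x)⁻¹ * (0 - 1)) x :=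
    (hasDerivAt_log (sub_pos.2 hx1).ne').comp x ((hasDerivAt_const x 1).sub (hasDerivAt_id x))
  refine ((hlog.sub hlog_one_sub).sub (hasDerivAt_inv hx0.ne')).congr_deriv ?_
  field_simp [(sub_pos.2 hx1).ne']
  ring

theorem strictMonoOn_odeClock : StrictMonoOn odeClock (Ioo 0 1) :=
  strictMonoOn_of_deriv_pos (convex_Ioo 0 1)
    (fun x hx => (hasDerivAt_odeClock hx).continuousAt.continuousWithinAt)
    fun x hx => by
      rw [interior_Ioo] at hx
      rw [(hasDerivAt_odeClock hx).deriv]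
      have := sub_pos.2 hx.2
      have := hx.1
      positivity

theorem odeClock_two_div_add_one {d : ℝ} (hd : 1 < d) :
    odeClock (2 / (d + 1)) = log 2 - log (d - 1) - (d + 1) / 2 := by
  have hd1 : 0 < d + 1 := by linarith
  have hsub : 1 - 2 / (d + 1) = (d - 1) / (d + 1) := by field_simp; ring
  rw [odeClock, hsub, inv_div, log_div two_ne_zero hd1.ne',
    log_div (by linarith) hd1.ne']
  ring

theorem odeClock_one_sub_sub_odeClock_le {d δ : ℝ} (hd : 1 < d) (hδ : δ ∈ Ioo 0 (1 / 2)) :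
    odeClock (1 - δ) - odeClock (2 / (d + 1)) ≤ d - 3 + 4 * log (1 / (2 * δ)) := by
  obtain ⟨hδ0, hδ1⟩ := hδ
  have h1δ : 0 < 1 - δ := by linarith
  have hd2 : log ((d - 1) / 2) ≤ (d - 1) / 2 - 1 := log_le_sub_one_of_pos (by linarith)
  have hδ2 : log (2 * (1 - δ)) ≤ 2 * (1 - δ) - 1 := log_le_sub_one_of_pos (by positivity)
  have hδ3 : log (2 * δ) ≤ 2 * δ - 1 := log_le_sub_one_of_pos (by positivity)
  have hinv : 4 * δ ≤ (1 - δ)⁻¹ := by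
    rw [← one_div, le_div_iff₀ h1δ]
    nlinarith [sq_nonneg (2 * δ - 1)]
  rw [log_div (by linarith) two_ne_zero] at hd2
  rw [log_mul two_ne_zero h1δ.ne'] at hδ2
  rw [log_mul two_ne_zero hδ0.ne'] at hδ3
  rw [odeClock_two_div_add_one hd, odeClock, sub_sub_cancel, one_div, log_inv,
    log_mul two_ne_zero hδ0.ne']
  linarith

section Solution

variable {y : ℝ → ℝ}

theorem solution_le_one
    (hy : ∀ t ∈ Ici (0 : ℝ), HasDerivWithinAt y (y t ^ 2 * (1 - y t)) (Ici 0) t)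
    (h0 : y 0 ≤ 1) {t : ℝ} (ht : 0 ≤ t) : y t ≤ 1 :=
  image_le_of_deriv_right_nonpos_above (fun x hx => (hy x hx.1).continuousWithinAt.mono
      Icc_subset_Ici_self)
    (fun x hx => (hy x hx.1).mono (Ici_subset_Ici.2 hx.1))
    (fun x _ hx => mul_nonpos_of_nonneg_of_nonpos (sq_nonneg _) (by linarith)) h0 t ⟨ht, le_rfl⟩

theorem solution_monotoneOn
    (hy : ∀ t ∈ Ici (0 : ℝ), HasDerivWithinAt y (y t ^ 2 * (1 - y t)) (Ici 0) t)
    (h0 : y 0 ≤ 1) : MonotoneOn y (Ici 0) :=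
  monotoneOn_of_hasDerivWithinAt_nonneg (convex_Ici 0) (fun t ht => (hy t ht).continuousWithinAt)
    (fun t ht => (hy t (interior_subset ht)).mono interior_subset)
    fun _ ht => mul_nonneg (sq_nonneg _) (sub_nonneg.2 (solution_le_one hy h0 (interior_subset ht)))

theorem odeClock_solution
    (hy : ∀ t ∈ Ici (0 : ℝ), HasDerivWithinAt y (y t ^ 2 * (1 - y t)) (Ici 0) t)
    (h0 : y 0 ∈ Ioo 0 1) {T : ℝ} (hT : 0 ≤ T) (hyT : y T < 1) :
    odeClock (y T) = odeClock (y 0) + T := by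
  have hmem : ∀ t ∈ Icc 0 T, y t ∈ Ioo 0 1 := fun t ht =>
    have hmono := solution_monotoneOn hy h0.2.le
    ⟨h0.1.trans_le (hmono self_mem_Ici ht.1 ht.1),
      (hmono ht.1 (mem_Ici.2 hT) ht.2).trans_lt hyT⟩
  have hcont : ContinuousOn (fun t => odeClock (y t) - t) (Icc 0 T) := fun t ht =>
    ((hasDerivAt_odeClock (hmem t ht)).continuousAt.comp_continuousWithinAt
      ((hy t ht.1).continuousWithinAt.mono Icc_subset_Ici_self)).sub continuousWithinAt_id
  have hderiv : ∀ t ∈ Ico 0 T, HasDerivWithinAt (fun t => odeClock (y t) - t) 0 (Ici t) t := by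
    intro t ht
    obtain ⟨hy0, hy1⟩ := hmem t (Ico_subset_Icc_self ht)
    refine (((hasDerivAt_odeClock ⟨hy0, hy1⟩).comp_hasDerivWithinAt t
      ((hy t ht.1).mono (Ici_subset_Ici.2 ht.1))).sub (hasDerivWithinAt_id t _)).congr_deriv ?_
    rw [inv_mul_cancel₀ (by have := sub_pos.2 hy1; positivity), sub_self]
  have := constant_of_has_deriv_right_zero hcont hderiv T ⟨hT, le_rfl⟩
  simp only [sub_zero] at this
  linarith

theorem exists_solution_eq
    (hy : ∀ t ∈ Ici (0 : ℝ), HasDerivWithinAt y (y t ^ 2 * (1 - y t)) (Ici 0) t)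
    (h0 : 0 < y 0) {c : ℝ} (hc : c ∈ Ico (y 0) 1) : ∃ T ≥ 0, y T = c := by
  have hy0 : y 0 ∈ Ioo 0 1 := ⟨h0, hc.1.trans_lt hc.2⟩
  have hc' : c ∈ Ioo 0 1 := ⟨h0.trans_le hc.1, hc.2⟩
  -- by the clock identity, `y` cannot stay below `c` beyond time `odeClock c - odeClock (y 0)`
  set T := odeClock c - odeClock (y 0) + 1
  have hT : 0 ≤ T := by
    have := strictMonoOn_odeClock.monotoneOn hy0 hc' hc.1
    linarith
  have hcT : c ≤ y T := by
    by_contra! hlt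
    have hclock := odeClock_solution hy hy0 hT (hlt.trans hc.2)
    have hyT : y T ∈ Ioo 0 1 :=
      ⟨h0.trans_le (solution_monotoneOn hy hy0.2.le self_mem_Ici (mem_Ici.2 hT) hT),
        hlt.trans hc.2⟩
    have := strictMonoOn_odeClock hyT hc' hlt
    linarith
  obtain ⟨T₀, hT₀, hyT₀⟩ := intermediate_value_Icc hT
    (fun t ht => (hy t ht.1).continuousWithinAt.mono Icc_subset_Ici_self) ⟨hc.1, hcT⟩
  exact ⟨T₀, hT₀.1, hyT₀⟩

end Solution

/-- Fix `d ≥ 3` and `δ ∈ (0, 1/2)`. Let `y : [0,∞) → ℝ` be a differentiable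
solution of `dy/dt = y²·(1 − y)` with `y(0) = 2/(d + 1)`. Then there exists `T₀ ≥ 0` with
`y(T₀) = 1 − δ`, and any such `T₀` satisfies `T₀ ≤ d − 3 + 4·log(1/(2δ))`. -/
theorem stmt_13 (d : ℕ) (hd : 3 ≤ d) (δ : ℝ) (hδ : δ ∈ Set.Ioo (0 : ℝ) (1 / 2))
    (y : ℝ → ℝ)
    (hODE : ∀ t ∈ Set.Ici (0 : ℝ),
      HasDerivWithinAt y ((y t) ^ 2 * (1 - y t)) (Set.Ici 0) t)
    (h0 : y 0 = 2 / (d + 1)) :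
    (∃ T₀ ≥ (0 : ℝ), y T₀ = 1 - δ) ∧
    ∀ T₀ ≥ (0 : ℝ), y T₀ = 1 - δ → T₀ ≤ d - 3 + 4 * Real.log (1 / (2 * δ)) := by
  obtain ⟨hδ0, hδ1⟩ := hδ
  have hd3 : (3 : ℝ) ≤ d := by exact_mod_cast hd
  have hy0 : 0 < y 0 := by rw [h0]; positivity
  have hy0_lt : y 0 < 1 - δ := by
    rw [h0, div_lt_iff₀ (by positivity)]
    nlinarith
  refine ⟨exists_solution_eq hODE hy0 ⟨hy0_lt.le, by linarith⟩, fun T₀ hT₀ hyT₀ => ?_⟩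
  have hclock := odeClock_solution hODE ⟨hy0, by linarith⟩ hT₀ (by linarith)
  rw [hyT₀, h0] at hclock
  linarith [odeClock_one_sub_sub_odeClock_le (by linarith : (1 : ℝ) < d) ⟨hδ0, hδ1⟩]
end

section
/- Fix d ≥ 3, δ ∈ (0, 1/2), and a > 0. Let V : [0,∞) → ℝ^d be a differentiable solution of dV_k/dt = a·V_k·(V_k² − Σ_{i=1}^d Vᵢ⁴), k = 1,…,d, with ‖V(0)‖ = 1 and with an index k₀ such that V_{k₀}(0)² ≥ 2·V_k(0)² for all k ≠ k₀. Then there exists a time T ≥ 0 with V_{k₀}(T)² ≥ 1 − δ and T ≤ a^{−1}·(d − 3 + 4·log(1/(2δ))). -/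
/-!
The flow preserves `∑ Vᵢ² = 1` and the dominance `2 V_k² ≤ V_{k₀}²`: each invariant is a
quantity `f` with `f(0) ≥ 0` obeying a linear differential inequality `f' ≥ c f`. Under both,
`∑ Vᵢ⁴ ≤ (m + m²)/2` for `m = V_{k₀}²`, so `m' ≥ a m² (1 - m)`. While `m ≤ 1/2` this gives
`(-2/m)' ≥ a`, and since `2/m(0) ≤ d + 1` the level `m = 1/2` is reached by time `(d - 3)/a`;
from then on `(-4 log (1 - m))' ≥ a`, so `1 - m` falls from `1/2` to `δ` within a further time
`4 log (1/(2δ)) / a`.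
-/

open Set Real

theorem monotoneOn_Icc_of_hasDerivWithinAt_nonneg {s : Set ℝ} {g g' : ℝ → ℝ} {x y : ℝ}
    (hs : Icc x y ⊆ s) (hg : ∀ t ∈ Icc x y, HasDerivWithinAt g (g' t) s t)
    (hg' : ∀ t ∈ Ioo x y, 0 ≤ g' t) : MonotoneOn g (Icc x y) := by
  refine monotoneOn_of_hasDerivWithinAt_nonneg (convex_Icc x y)
    (fun t ht => (hg t ht).continuousWithinAt.mono hs) (fun t ht => ?_)
    (by simpa only [interior_Icc])
  rw [interior_Icc] at ht ⊢
  exact (hg t (Ioo_subset_Icc_self ht)).mono (Ioo_subset_Icc_self.trans hs)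

theorem nonneg_of_hasDerivWithinAt_Ici_of_mul_le {f f' c : ℝ → ℝ} (hc : ContinuousOn c (Ici 0))
    (hf : ∀ t ∈ Ici (0 : ℝ), HasDerivWithinAt f (f' t) (Ici 0) t)
    (hfc : ∀ t ∈ Ici (0 : ℝ), c t * f t ≤ f' t) (h0 : 0 ≤ f 0) {t : ℝ} (ht : 0 ≤ t) :
    0 ≤ f t := by
  -- integrating factor: `f · exp (-∫₀ c)` is nondecreasing
  set C : ℝ → ℝ := fun u => ∫ s in (0 : ℝ)..u, c (max s 0)
  have hC : ∀ u ∈ Ici (0 : ℝ), HasDerivAt C (c u) u := fun u hu => by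
    have hcont : Continuous fun s => c (max s 0) :=
      hc.comp_continuous (by fun_prop) fun s => le_max_right s 0
    simpa [max_eq_left (mem_Ici.mp hu)] using (hcont.integral_hasStrictDerivAt 0 u).hasDerivAt
  have hmono : MonotoneOn (fun u => f u * exp (-C u)) (Icc 0 t) := by
    refine monotoneOn_Icc_of_hasDerivWithinAt_nonneg Icc_subset_Ici_self
      (fun u hu => (hf u hu.1).mul (hC u hu.1).neg.exp.hasDerivWithinAt) fun u hu => ?_
    have hu' : u ∈ Ici (0 : ℝ) := le_of_lt hu.1
    show 0 ≤ f' u * exp (-C u) + f u * (exp (-C u) * -c u)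
    nlinarith [hfc u hu', exp_pos (-C u)]
  have h := hmono ⟨le_rfl, ht⟩ ⟨ht, le_rfl⟩ ht
  simp only [C, intervalIntegral.integral_same, neg_zero, exp_zero, mul_one] at h
  exact nonneg_of_mul_nonneg_left (h0.trans h) (exp_pos _)

section Dominant

variable {ι : Type*} [Fintype ι] [DecidableEq ι] {x : ι → ℝ} {k₀ : ι}

theorem two_le_card_add_one_mul_sq_of_dominant (hx : ∑ i, x i ^ 2 = 1)
    (hdom : ∀ k ≠ k₀, 2 * x k ^ 2 ≤ x k₀ ^ 2) :
    2 ≤ (Fintype.card ι + 1) * x k₀ ^ 2 := by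
  have hle : ∀ i ∈ Finset.univ, 2 * x i ^ 2 ≤ x k₀ ^ 2 + if k₀ = i then x k₀ ^ 2 else 0 := by
    intro i _
    by_cases hi : k₀ = i
    · subst hi
      rw [if_pos rfl]
      linarith
    · simpa [hi] using hdom i (Ne.symm hi)
  have := Finset.sum_le_sum hle
  simp only [← Finset.mul_sum, hx, Finset.sum_add_distrib, Finset.sum_const, Finset.card_univ,
    nsmul_eq_mul, Finset.sum_ite_eq, Finset.mem_univ, if_true] at this
  linarith

theorem sum_pow_four_le_of_dominant (hx : ∑ i, x i ^ 2 = 1)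
    (hdom : ∀ k ≠ k₀, 2 * x k ^ 2 ≤ x k₀ ^ 2) :
    ∑ i, x i ^ 4 ≤ (x k₀ ^ 2 + (x k₀ ^ 2) ^ 2) / 2 := by
  have hle : ∀ i ∈ Finset.univ,
      x i ^ 4 ≤ x k₀ ^ 2 / 2 * x i ^ 2 + if k₀ = i then (x k₀ ^ 2) ^ 2 / 2 else 0 := by
    intro i _
    by_cases hi : k₀ = i
    · subst hi
      rw [if_pos rfl]
      exact le_of_eq (by ring)
    · simp only [hi, if_false, add_zero]
      nlinarith [hdom i (Ne.symm hi), sq_nonneg (x i)]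
  have := Finset.sum_le_sum hle
  simp only [Finset.sum_add_distrib, ← Finset.mul_sum, hx, Finset.sum_ite_eq, Finset.mem_univ,
    if_true] at this
  linarith

end Dominant

def QuarticFlow {ι : Type*} [Fintype ι] (a : ℝ) (x : ℝ → ι → ℝ) : Prop :=
  ∀ t ∈ Ici (0 : ℝ), ∀ k, HasDerivWithinAt (fun s => x s k)
    (a * x t k * (x t k ^ 2 - ∑ i, x t i ^ 4)) (Ici 0) t

namespace QuarticFlow

variable {ι : Type*} [Fintype ι] {a : ℝ} {x : ℝ → ι → ℝ}

theorem continuousOn (h : QuarticFlow a x) (k : ι) : ContinuousOn (fun s => x s k) (Ici 0) :=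
  fun t ht => (h t ht k).continuousWithinAt

theorem hasDerivWithinAt_sq (h : QuarticFlow a x) {t : ℝ} (ht : t ∈ Ici 0) (k : ι) :
    HasDerivWithinAt (fun s => x s k ^ 2)
      (2 * a * x t k ^ 2 * (x t k ^ 2 - ∑ i, x t i ^ 4)) (Ici 0) t := by
  refine ((h t ht k).fun_pow 2).congr_deriv ?_
  push_cast
  ring

theorem sum_sq_eq_one (h : QuarticFlow a x) (h0 : ∑ i, x 0 i ^ 2 = 1) {t : ℝ} (ht : 0 ≤ t) :
    ∑ i, x t i ^ 2 = 1 := by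
  have hN : ∀ t ∈ Ici (0 : ℝ), HasDerivWithinAt (fun s => ∑ i, x s i ^ 2)
      (-2 * a * (∑ i, x t i ^ 4) * (∑ i, x t i ^ 2 - 1)) (Ici 0) t := by
    intro t ht
    refine (HasDerivWithinAt.fun_sum fun i _ => h.hasDerivWithinAt_sq ht i).congr_deriv ?_
    have hterm : ∀ j, 2 * a * x t j ^ 2 * (x t j ^ 2 - ∑ i, x t i ^ 4)
        = 2 * a * x t j ^ 4 - 2 * a * (∑ i, x t i ^ 4) * x t j ^ 2 := fun j => by ring
    simp only [hterm, Finset.sum_sub_distrib, ← Finset.mul_sum]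
    ring
  have hc : ContinuousOn (fun t => -2 * a * ∑ i, x t i ^ 4) (Ici 0) := by
    have := h.continuousOn
    fun_prop
  have hle := nonneg_of_hasDerivWithinAt_Ici_of_mul_le hc (fun t ht => (hN t ht).sub_const 1)
    (fun t _ => le_rfl) (by simp only [h0, sub_self, le_refl]) ht
  have hge := nonneg_of_hasDerivWithinAt_Ici_of_mul_le hc (fun t ht => (hN t ht).const_sub 1)
    (fun t _ => le_of_eq (by ring)) (by simp only [h0, sub_self, le_refl]) ht
  linarith

theorem two_mul_sq_le (h : QuarticFlow a x) (ha : 0 ≤ a) {k k₀ : ι}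
    (h0 : 2 * x 0 k ^ 2 ≤ x 0 k₀ ^ 2) {t : ℝ} (ht : 0 ≤ t) : 2 * x t k ^ 2 ≤ x t k₀ ^ 2 := by
  have hc : ContinuousOn
      (fun t => 2 * a * (x t k₀ ^ 2 + 2 * x t k ^ 2 - ∑ i, x t i ^ 4)) (Ici 0) := by
    have := h.continuousOn
    fun_prop
  have := nonneg_of_hasDerivWithinAt_Ici_of_mul_le hc
    (fun t ht => (h.hasDerivWithinAt_sq ht k₀).fun_sub ((h.hasDerivWithinAt_sq ht k).const_mul 2))
    (fun t _ => by nlinarith [sq_nonneg (x t k ^ 2)]) (by linarith) ht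
  linarith

end QuarticFlow

section Escape

variable {m m' : ℝ → ℝ} {a : ℝ}

theorem monotoneOn_Ici_of_sq_mul_one_sub_le_deriv (ha : 0 ≤ a)
    (hm : ∀ t ∈ Ici (0 : ℝ), HasDerivWithinAt m (m' t) (Ici 0) t)
    (hm' : ∀ t ∈ Ici (0 : ℝ), a * m t ^ 2 * (1 - m t) ≤ m' t)
    (hm1 : ∀ t ∈ Ici (0 : ℝ), m t ≤ 1) : MonotoneOn m (Ici 0) := by
  refine monotoneOn_of_hasDerivWithinAt_nonneg (f' := m') (convex_Ici 0)
    (fun t ht => (hm t ht).continuousWithinAt) (fun t ht => ?_) fun t ht => ?_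
  · rw [interior_Ici] at ht ⊢
    exact (hm t (Ioi_subset_Ici_self ht)).mono Ioi_subset_Ici_self
  · rw [interior_Ici] at ht
    have := hm1 t (Ioi_subset_Ici_self ht)
    exact le_trans (by positivity) (hm' t (Ioi_subset_Ici_self ht))

theorem half_le_of_two_div_sub_le (ha : 0 ≤ a)
    (hm : ∀ t ∈ Ici (0 : ℝ), HasDerivWithinAt m (m' t) (Ici 0) t)
    (hm' : ∀ t ∈ Ici (0 : ℝ), a * m t ^ 2 * (1 - m t) ≤ m' t)
    (hm1 : ∀ t ∈ Ici (0 : ℝ), m t ≤ 1) (h0 : 0 < m 0) {t : ℝ} (ht : 0 ≤ t)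
    (htime : 2 / m 0 - a * t ≤ 4) : 1 / 2 ≤ m t := by
  by_contra! hlt
  have hmono := monotoneOn_Ici_of_sq_mul_one_sub_le_deriv ha hm hm' hm1
  have hpos : ∀ s ∈ Icc 0 t, 0 < m s := fun s hs =>
    h0.trans_le (hmono self_mem_Ici hs.1 hs.1)
  have hg : MonotoneOn (fun s => -2 / m s - a * s) (Icc 0 t) := by
    refine monotoneOn_Icc_of_hasDerivWithinAt_nonneg Icc_subset_Ici_self
      (fun s hs => (((hm s hs.1).inv (hpos s hs).ne').const_mul (-2)).sub
        ((hasDerivWithinAt_id s _).const_mul a)) fun s hs => ?_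
    have hs' : s ∈ Icc 0 t := Ioo_subset_Icc_self hs
    have hms : m s ≤ 1 / 2 := (hmono hs'.1 ht hs'.2).trans hlt.le
    have hps := hpos s hs'
    have hm's := hm' s hs'.1
    rw [show -2 * (-m' s / m s ^ 2) - a * 1 = (2 * m' s - a * m s ^ 2) / m s ^ 2 by
      field_simp]
    exact div_nonneg (by nlinarith [mul_nonneg ha (sq_nonneg (m s))]) (by positivity)
  have h := hg ⟨le_rfl, ht⟩ ⟨ht, le_rfl⟩ ht
  simp only [mul_zero, sub_zero] at h
  have : 2 / m t ≤ 4 := by rw [neg_div, neg_div] at h; linarith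
  rw [div_le_iff₀ (hpos t ⟨ht, le_rfl⟩)] at this
  linarith

theorem one_sub_le_of_log_le (ha : 0 ≤ a)
    (hm : ∀ t ∈ Ici (0 : ℝ), HasDerivWithinAt m (m' t) (Ici 0) t)
    (hm' : ∀ t ∈ Ici (0 : ℝ), a * m t ^ 2 * (1 - m t) ≤ m' t)
    (hm1 : ∀ t ∈ Ici (0 : ℝ), m t ≤ 1) {δ t₁ t : ℝ} (hδ : 0 < δ) (ht₁ : 0 ≤ t₁) (ht : t₁ ≤ t)
    (h₁ : 1 / 2 ≤ m t₁) (htime : 4 * log (1 / (2 * δ)) ≤ a * (t - t₁)) : 1 - δ ≤ m t := by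
  by_contra! hlt
  have hmono := monotoneOn_Ici_of_sq_mul_one_sub_le_deriv ha hm hm' hm1
  have hsub : Icc t₁ t ⊆ Ici 0 := fun s hs => ht₁.trans hs.1
  have hhalf : ∀ s ∈ Icc t₁ t, 1 / 2 ≤ m s := fun s hs => h₁.trans (hmono ht₁ (hsub hs) hs.1)
  have hlt1 : ∀ s ∈ Icc t₁ t, m s < 1 := fun s hs =>
    ((hmono (hsub hs) (ht₁.trans ht) hs.2).trans_lt hlt).trans (by linarith)
  have hg : MonotoneOn (fun s => -4 * log (1 - m s) - a * s) (Icc t₁ t) := by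
    refine monotoneOn_Icc_of_hasDerivWithinAt_nonneg hsub
      (fun s hs => ((((hm s (hsub hs)).const_sub 1).log
        (sub_ne_zero.mpr (hlt1 s hs).ne')).const_mul (-4)).sub
          ((hasDerivWithinAt_id s _).const_mul a)) fun s hs => ?_
    have hs' : s ∈ Icc t₁ t := Ioo_subset_Icc_self hs
    have h1 : 0 < 1 - m s := sub_pos.mpr (hlt1 s hs')
    have hms := hhalf s hs'
    have hm's := hm' s (hsub hs')
    rw [show -4 * (-m' s / (1 - m s)) - a * 1 = (4 * m' s - a * (1 - m s)) / (1 - m s) by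
      field_simp]
    have hsq : 1 / 4 ≤ m s ^ 2 := by nlinarith
    exact div_nonneg (by nlinarith [mul_nonneg (mul_nonneg ha h1.le) (sub_nonneg.mpr hsq)]) h1.le
  have h := hg ⟨le_rfl, ht⟩ ⟨ht, le_rfl⟩ ht
  have hlog₁ : log (1 - m t₁) ≤ -log 2 := by
    rw [← log_inv]
    exact log_le_log (sub_pos.mpr (hlt1 t₁ ⟨le_rfl, ht⟩)) (by linarith)
  have hlogδ : log (1 / (2 * δ)) = -log 2 - log δ := by
    rw [one_div, log_inv, log_mul two_ne_zero hδ.ne']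
    ring
  have : log (1 - m t) ≤ log δ := by nlinarith
  have := (log_le_log_iff (sub_pos.mpr (hlt1 t ⟨ht, le_rfl⟩)) hδ).mp this
  linarith

end Escape

/-- Fix `d ≥ 3`, `δ ∈ (0, 1/2)`, `a > 0`. Let `V : [0,∞) → ℝ^d` be a
differentiable solution of `dV_k/dt = a·V_k·(V_k² − Σᵢ Vᵢ⁴)` with `‖V(0)‖ = 1` and an index
`k₀` such that `V_{k₀}(0)² ≥ 2·V_k(0)²` for all `k ≠ k₀`. Then there exists `T ≥ 0` with
`V_{k₀}(T)² ≥ 1 − δ` and `T ≤ a⁻¹·(d − 3 + 4·log(1/(2δ)))`. -/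
theorem stmt_14 {d : ℕ} (hd : 3 ≤ d) (δ a : ℝ) (hδ : δ ∈ Set.Ioo (0 : ℝ) (1 / 2))
    (ha : 0 < a) (V : ℝ → EuclideanSpace ℝ (Fin d))
    (hODE : ∀ t ∈ Set.Ici (0 : ℝ), ∀ k : Fin d,
      HasDerivWithinAt (fun s => V s k)
        (a * V t k * ((V t k) ^ 2 - ∑ i, (V t i) ^ 4)) (Set.Ici 0) t)
    (hnorm : ‖V 0‖ = 1) (k₀ : Fin d)
    (hk₀ : ∀ k : Fin d, k ≠ k₀ → 2 * (V 0 k) ^ 2 ≤ (V 0 k₀) ^ 2) :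
    ∃ T ≥ (0 : ℝ), 1 - δ ≤ (V T k₀) ^ 2 ∧
      T ≤ a⁻¹ * (d - 3 + 4 * Real.log (1 / (2 * δ))) := by
  obtain ⟨hδ₀, hδ₁⟩ := hδ
  set x : ℝ → Fin d → ℝ := fun t k => V t k
  have hflow : QuarticFlow a x := hODE
  have hx₀ : ∑ i, x 0 i ^ 2 = 1 := by rw [← EuclideanSpace.real_norm_sq_eq, hnorm, one_pow]
  have hsum (t : ℝ) (ht : t ∈ Ici 0) := hflow.sum_sq_eq_one hx₀ ht
  have hdom (t : ℝ) (ht : t ∈ Ici 0) (k : Fin d) (hk : k ≠ k₀) :=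
    hflow.two_mul_sq_le ha.le (hk₀ k hk) ht
  set m : ℝ → ℝ := fun t => x t k₀ ^ 2
  have hm (t : ℝ) (ht : t ∈ Ici 0) := hflow.hasDerivWithinAt_sq ht k₀
  have hm' (t : ℝ) (ht : t ∈ Ici 0) :
      a * m t ^ 2 * (1 - m t) ≤ 2 * a * m t * (m t - ∑ i, x t i ^ 4) := by
    have hS := sum_pow_four_le_of_dominant (hsum t ht) (hdom t ht)
    nlinarith [mul_le_mul_of_nonneg_left hS (by positivity : 0 ≤ 2 * a * m t)]
  have hm1 (t : ℝ) (ht : t ∈ Ici 0) : m t ≤ 1 :=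
    hsum t ht ▸ Finset.single_le_sum (fun i _ => sq_nonneg (x t i)) (Finset.mem_univ k₀)
  have hm₀ := two_le_card_add_one_mul_sq_of_dominant hx₀ hk₀
  rw [Fintype.card_fin] at hm₀
  have hd' : (3 : ℝ) ≤ d := by exact_mod_cast hd
  have hm₀pos : 0 < m 0 := by nlinarith
  have hlog : 0 ≤ log (1 / (2 * δ)) := log_nonneg (by rw [le_div_iff₀ (by positivity)]; linarith)
  set T₁ := a⁻¹ * (d - 3)
  have hT₁ : 0 ≤ T₁ := mul_nonneg (inv_nonneg.mpr ha.le) (by linarith)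
  have hhalf : 1 / 2 ≤ m T₁ := by
    refine half_le_of_two_div_sub_le ha.le hm hm' hm1 hm₀pos hT₁ ?_
    have : 2 / m 0 ≤ d + 1 := by rw [div_le_iff₀ hm₀pos]; linarith
    rw [mul_inv_cancel_left₀ ha.ne']
    linarith
  have hT₁T : T₁ ≤ a⁻¹ * (d - 3 + 4 * log (1 / (2 * δ))) :=
    mul_le_mul_of_nonneg_left (by linarith) (inv_nonneg.mpr ha.le)
  refine ⟨_, hT₁.trans hT₁T, one_sub_le_of_log_le ha.le hm hm' hm1 hδ₀ hT₁ hT₁T hhalf ?_, le_rfl⟩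
  exact le_of_eq (by simp only [T₁]; field_simp; ring)
end

section
/- Let a > 0 and C ≥ 0, and define f : [0,∞) → ℝ by f(t) = 1/2 + (1/2)·(1 + C·e^{−at})^{−1/2}. Then f is differentiable and satisfies f'(t) = −2a·f(t)·(f(t) − 1/2)·(f(t) − 1) for all t ≥ 0; the same holds for g(t) = 1/2 − (1/2)·(1 + C·e^{−at})^{−1/2}. -/
/-!
Write `w = (1 + C e^{-at})^{-1/2}`. Since `u = 1 + C e^{-at}` solves `u' = -a (u - 1)`, the
square `w² = 1/u` solves the logistic equation `(w²)' = a w² (1 - w²)`, i.e.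
`w' = (a/2) w (1 - w²)`. The affine substitution `z = (1 ± w)/2` carries this equation into
`z' = -2a z (z - 1/2) (z - 1)`, because `z - 1/2 = ±w/2` and `z (z - 1) = (w² - 1)/4`.
-/

lemma hasDerivAt_one_add_mul_exp_rpow_neg_half {a C t : ℝ} (hu : 0 < 1 + C * Real.exp (-a * t)) :
    HasDerivAt (fun t => (1 + C * Real.exp (-a * t)) ^ (-(1 / 2) : ℝ))
      (a / 2 * (1 + C * Real.exp (-a * t)) ^ (-(1 / 2) : ℝ) *
        (1 - ((1 + C * Real.exp (-a * t)) ^ (-(1 / 2) : ℝ)) ^ 2)) t := by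
  set u := 1 + C * Real.exp (-a * t)
  set w := u ^ (-(1 / 2) : ℝ)
  have hu' : HasDerivAt (fun t => 1 + C * Real.exp (-a * t)) (-a * (u - 1)) t := by
    have hlin : HasDerivAt (fun t => -a * t) (-a) t := by
      simpa using (hasDerivAt_id t).const_mul (-a)
    exact ((hlin.exp.const_mul C).const_add 1).congr_deriv (by simp only [u]; ring)
  have hw_sq : w ^ 2 = u⁻¹ := by
    rw [← Real.rpow_natCast, ← Real.rpow_mul hu.le]
    norm_num [Real.rpow_neg_one]
  have hw_pow : u ^ ((-(1 / 2) : ℝ) - 1) = w * u⁻¹ := by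
    rw [sub_eq_add_neg, Real.rpow_add hu, Real.rpow_neg_one]
  refine (hu'.rpow_const (p := -(1 / 2)) (Or.inl hu.ne')).congr_deriv ?_
  rw [hw_pow, hw_sq]
  field_simp

lemma hasDerivAt_cubic_of_half_add_half_mul {a s t : ℝ} {w z : ℝ → ℝ} (hs : s ^ 2 = 1)
    (hz : ∀ t, z t = 1 / 2 + s / 2 * w t) (hw : HasDerivAt w (a / 2 * w t * (1 - w t ^ 2)) t) :
    HasDerivAt z (-2 * a * z t * (z t - 1 / 2) * (z t - 1)) t := by
  obtain rfl : z = fun t => 1 / 2 + s / 2 * w t := funext hz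
  refine ((hw.const_mul (s / 2)).const_add (1 / 2)).congr_deriv ?_
  beta_reduce
  linear_combination (a / 4 * s * w t ^ 3) * hs

theorem stmt_15_general (a C : ℝ) (hC : 0 ≤ C) (f g : ℝ → ℝ)
    (hf : ∀ t, f t = 1 / 2 + 1 / 2 * (1 + C * Real.exp (-a * t)) ^ (-(1 / 2) : ℝ))
    (hg : ∀ t, g t = 1 / 2 - 1 / 2 * (1 + C * Real.exp (-a * t)) ^ (-(1 / 2) : ℝ)) :
    ∀ t ≥ (0 : ℝ),
      HasDerivAt f (-2 * a * f t * (f t - 1 / 2) * (f t - 1)) t ∧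
      HasDerivAt g (-2 * a * g t * (g t - 1 / 2) * (g t - 1)) t := by
  intro t _
  have hw := hasDerivAt_one_add_mul_exp_rpow_neg_half (a := a) (t := t) (by positivity)
  exact ⟨hasDerivAt_cubic_of_half_add_half_mul (s := 1) (by norm_num) (fun t => by linarith [hf t]) hw,
    hasDerivAt_cubic_of_half_add_half_mul (s := -1) (by norm_num) (fun t => by linarith [hg t]) hw⟩

/-- Let `a > 0`, `C ≥ 0`, and `f(t) = 1/2 + (1/2)(1 + C·e^{−at})^{−1/2}`,
`g(t) = 1/2 − (1/2)(1 + C·e^{−at})^{−1/2}`. Then on `[0,∞)` both `f` and `g` are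
differentiable with `f'(t) = −2a·f(t)·(f(t) − 1/2)·(f(t) − 1)` and likewise for `g`. -/
theorem stmt_15 (a C : ℝ) (ha : 0 < a) (hC : 0 ≤ C) (f g : ℝ → ℝ)
    (hf : ∀ t, f t = 1 / 2 + 1 / 2 * (1 + C * Real.exp (-a * t)) ^ (-(1 / 2) : ℝ))
    (hg : ∀ t, g t = 1 / 2 - 1 / 2 * (1 + C * Real.exp (-a * t)) ^ (-(1 / 2) : ℝ)) :
    ∀ t ≥ (0 : ℝ),
      HasDerivAt f (-2 * a * f t * (f t - 1 / 2) * (f t - 1)) t ∧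
      HasDerivAt g (-2 * a * g t * (g t - 1 / 2) * (g t - 1)) t :=
  stmt_15_general a C hC f g hf hg
end
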